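/- arXiv:1912.07713 — 2 statements merged into one kernel-verified Lean document; each statement's English description precedes it below -/
import Mathlib

section
/- The class X = Av(2143, 2413, 3142, 3412), defined as the closure of {1} under the operations π ↦ 1 ⊕ π, 1 ⊖ π, π ⊕ 1, π ⊖ 1, is closed under pattern containment: if τ ∈ X and π ≤ τ, then π ∈ X. -/
open Equiv Filter

/-- A permutation pattern: a size together with a permutation of that size. -/
abbrev Pattern := Σ n : ℕ, Equiv.Perm (Fin n)

/-- Direct sum of permutations: `α` to the left of and below `β`. -/
def sumPerm {m n : ℕ} (α : Equiv.Perm (Fin m)) (β : Equiv.Perm (Fin n)) :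
    Equiv.Perm (Fin (m + n)) :=
  finSumFinEquiv.symm.trans ((α.sumCongr β).trans finSumFinEquiv)

/-- Skew sum of permutations: `α` to the left of and above `β`. -/
def skewPerm {m n : ℕ} (α : Equiv.Perm (Fin m)) (β : Equiv.Perm (Fin n)) :
    Equiv.Perm (Fin (m + n)) :=
  finSumFinEquiv.symm.trans ((α.sumCongr β).trans
    ((Equiv.sumComm (Fin m) (Fin n)).trans (finSumFinEquiv.trans (finCongr (Nat.add_comm n m)))))

/-- Pattern containment: `Contains p q` means `p` is contained (as a pattern) in `q`. -/
def Contains (p q : Pattern) : Prop :=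
  ∃ f : Fin p.1 → Fin q.1, StrictMono f ∧ ∀ s t, p.2 s < p.2 t ↔ q.2 (f s) < q.2 (f t)

def sumP (p q : Pattern) : Pattern := ⟨p.1 + q.1, sumPerm p.2 q.2⟩
def skewP (p q : Pattern) : Pattern := ⟨p.1 + q.1, skewPerm p.2 q.2⟩

/-- The singleton permutation 1. -/
def onePat : Pattern := ⟨1, 1⟩
/-- The increasing permutation of size `k`. -/
def idPat (k : ℕ) : Pattern := ⟨k, 1⟩
/-- The decreasing permutation of size `k`. -/
def revPat (k : ℕ) : Pattern := ⟨k, Fin.revPerm⟩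

def BeginsWithMin (p : Pattern) : Prop := ∃ h : 0 < p.1, p.2 ⟨0, h⟩ = ⟨0, h⟩
def EndsWithMax (p : Pattern) : Prop :=
  ∃ h : 0 < p.1, p.2 ⟨p.1 - 1, by omega⟩ = ⟨p.1 - 1, by omega⟩
def BeginsWithMax (p : Pattern) : Prop :=
  ∃ h : 0 < p.1, p.2 ⟨0, h⟩ = ⟨p.1 - 1, by omega⟩
def EndsWithMin (p : Pattern) : Prop :=
  ∃ h : 0 < p.1, p.2 ⟨p.1 - 1, by omega⟩ = ⟨0, h⟩

def IsIncreasingP (p : Pattern) : Prop := ∀ i j : Fin p.1, i ≤ j → p.2 i ≤ p.2 j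
def IsDecreasingP (p : Pattern) : Prop := ∀ i j : Fin p.1, i ≤ j → p.2 j ≤ p.2 i
/-- Monotone permutations (increasing or decreasing). -/
def MonotoneP (p : Pattern) : Prop := IsIncreasingP p ∨ IsDecreasingP p
/-- A crossed permutation is one that is not monotone. -/
def CrossedP (p : Pattern) : Prop := ¬ MonotoneP p
/-- Positive: size at least 2, begins with its minimum or ends with its maximum. -/
def PositiveP (p : Pattern) : Prop := 2 ≤ p.1 ∧ (BeginsWithMin p ∨ EndsWithMax p)
/-- Negative: size at least 2, begins with its maximum or ends with its minimum. -/
def NegativeP (p : Pattern) : Prop := 2 ≤ p.1 ∧ (BeginsWithMax p ∨ EndsWithMin p)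

/-- The class X: the closure of {1} under π ↦ 1⊕π, 1⊖π, π⊕1, π⊖1. -/
inductive InX : Pattern → Prop
  | base : InX onePat
  | sumL {p : Pattern} : InX p → InX (sumP onePat p)
  | skewL {p : Pattern} : InX p → InX (skewP onePat p)
  | sumR {p : Pattern} : InX p → InX (sumP p onePat)
  | skewR {p : Pattern} : InX p → InX (skewP p onePat)

/-!
Every permutation of X arises from a smaller one of X by adding a point at one of the four
corners of its diagram, so induct on the construction of `τ`. Let `τ` be `τ'` with a corner
point `c` added and fix an occurrence of `π` in `τ`. If it avoids `c`, it is an occurrence in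
`τ'`. If it hits `c` at an entry `j` of `π`, then `j` is a corner of `π` of the same kind, so
`π` is obtained from `π` minus `j` by the same corner extension, and `π` minus `j` occurs
in `τ'`.
-/

theorem lt_iff_lt_swap {α β : Type*} [LinearOrder α] [LinearOrder β] {a b : α} {a' b' : β}
    (hab : a ≠ b) (hab' : a' ≠ b') (h : a < b ↔ a' < b') : b < a ↔ b' < a' := by
  rw [← not_iff_not, not_lt, not_lt, hab.le_iff_lt, hab'.le_iff_lt]
  exact h

/-- `c` is the maximum of `α` if `isMax` holds and its minimum otherwise. -/
def IsEndpoint {α : Type*} [LT α] (isMax : Prop) (c : α) : Prop :=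
  ∀ y, y ≠ c → (y < c ↔ isMax)

theorem isEndpoint_false_of_val_eq_zero {n : ℕ} {c : Fin n} (h : (c : ℕ) = 0) :
    IsEndpoint False c := fun y _ => by simp [Fin.lt_def, h]

theorem isEndpoint_true_of_val_add_one_eq {n : ℕ} {c : Fin n} (h : (c : ℕ) + 1 = n) :
    IsEndpoint True c := fun y hy => by
  simp only [ne_eq, Fin.ext_iff] at hy
  simp only [Fin.lt_def, iff_true]
  omega

def IsOccurrence (p q : Pattern) (f : Fin p.1 → Fin q.1) : Prop :=
  StrictMono f ∧ ∀ s t, p.2 s < p.2 t ↔ q.2 (f s) < q.2 (f t)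

namespace IsOccurrence

variable {p q r : Pattern} {f : Fin p.1 → Fin q.1}

theorem comp {g : Fin q.1 → Fin r.1} (hf : IsOccurrence p q f)
    (hg : IsOccurrence q r g) : IsOccurrence p r (g ∘ f) :=
  ⟨hg.1.comp hf.1, fun s t => (hf.2 s t).trans (hg.2 (f s) (f t))⟩

theorem contains_of_forall_mem_range {e : Fin r.1 → Fin q.1}
    (he : IsOccurrence r q e) (hf : IsOccurrence p q f) (hfe : ∀ t, f t ∈ Set.range e) :
    Contains p r := by
  choose g hg using hfe
  refine ⟨g, fun s t hst => ?_, fun s t => ?_⟩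
  · rw [← he.1.lt_iff_lt, hg, hg]
    exact hf.1 hst
  · rw [hf.2, ← hg, ← hg, he.2]

theorem eq_of_card_eq (hf : IsOccurrence p q f) (h : p.1 = q.1) :
    p = q := by
  obtain ⟨n, σ⟩ := p
  obtain ⟨m, τ⟩ := q
  obtain rfl : n = m := h
  have hf_id : f = id := hf.1.eq_id
  have : StrictMono (τ ∘ σ.symm) := fun a b hab => by
    simpa [hf_id] using (hf.2 (σ.symm a) (σ.symm b)).1 (by simpa using hab)
  congr
  ext x
  simpa using congrArg Fin.val (congrArg (· (σ x)) this.eq_id).symm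

theorem isEndpoint_of_apply {P : Prop} (hf : IsOccurrence p q f) {j : Fin p.1}
    (hj : IsEndpoint P (f j)) : IsEndpoint P j := fun t ht => by
  rw [← hf.1.lt_iff_lt]
  exact hj _ (hf.1.injective.ne ht)

theorem isEndpoint_value_of_apply {P : Prop} (hf : IsOccurrence p q f) {j : Fin p.1}
    (hj : IsEndpoint P (q.2 (f j))) : IsEndpoint P (p.2 j) := fun u hu => by
  obtain ⟨t, rfl⟩ := p.2.surjective u
  rw [hf.2]
  exact hj _ ((q.2.injective.comp hf.1.injective).ne (p.2.injective.ne_iff.1 hu))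

end IsOccurrence

theorem eq_onePat_of_card_eq_one {p : Pattern} (h : p.1 = 1) : p = onePat := by
  obtain ⟨n, σ⟩ := p
  obtain rfl : n = 1 := h
  rw [Subsingleton.elim σ 1]
  rfl

/-- Delete the entry at position `i` of `σ` and standardize the remaining entries. -/
def Equiv.Perm.erase {n : ℕ} (σ : Perm (Fin (n + 1))) (i : Fin (n + 1)) : Perm (Fin n) :=
  (finSuccAboveEquiv i).trans
    ((σ.subtypeEquiv (q := (· ≠ σ i)) fun _ => σ.injective.ne_iff.symm).trans
      (finSuccAboveEquiv (σ i)).symm)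

theorem Equiv.Perm.succAbove_erase_apply {n : ℕ} (σ : Perm (Fin (n + 1))) (i : Fin (n + 1))
    (x : Fin n) : (σ i).succAbove (σ.erase i x) = σ (i.succAbove x) :=
  congrArg Subtype.val ((finSuccAboveEquiv (σ i)).apply_symm_apply _)

theorem isOccurrence_succAbove {n : ℕ} (σ : Perm (Fin (n + 1))) (i : Fin (n + 1)) :
    IsOccurrence ⟨n, σ.erase i⟩ ⟨n + 1, σ⟩ i.succAbove :=
  ⟨Fin.strictMono_succAbove i, fun s t => by
    simp only [← Equiv.Perm.succAbove_erase_apply, Fin.succAbove_lt_succAbove_iff]⟩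

theorem isOccurrence_insertNth {n : ℕ} {σ : Perm (Fin (n + 1))} {j : Fin (n + 1)} {q : Pattern}
    {e : Fin n → Fin q.1} {c : Fin q.1} (he : IsOccurrence ⟨n, σ.erase j⟩ q e)
    (hc : ∀ x, e x ≠ c) (hpos : ∀ x, j.succAbove x < j ↔ e x < c)
    (hval : ∀ x, σ (j.succAbove x) < σ j ↔ q.2 (e x) < q.2 c) :
    IsOccurrence ⟨n + 1, σ⟩ q (Fin.insertNth (α := fun _ => Fin q.1) j c e) := by
  set g : Fin (n + 1) → Fin q.1 := Fin.insertNth (α := fun _ => Fin q.1) j c e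
  have g_same : g j = c := Fin.insertNth_apply_same (α := fun _ => Fin q.1) j c e
  have g_succAbove x : g (j.succAbove x) = e x :=
    Fin.insertNth_apply_succAbove (α := fun _ => Fin q.1) j c e x
  let Preserves s t := (s < t ↔ g s < g t) ∧ (σ s < σ t ↔ q.2 (g s) < q.2 (g t))
  have h_old x y : Preserves (j.succAbove x) (j.succAbove y) := by
    simp only [Preserves, g_succAbove, Fin.succAbove_lt_succAbove_iff, he.1.lt_iff_lt,
      ← Equiv.Perm.succAbove_erase_apply, he.2, and_self]
  have h_old_new x : Preserves (j.succAbove x) j := by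
    simp only [Preserves, g_succAbove, g_same]
    exact ⟨hpos x, hval x⟩
  have h_new_old x : Preserves j (j.succAbove x) := by
    have hne := j.succAbove_ne x
    refine ⟨lt_iff_lt_swap hne ?_ (h_old_new x).1,
      lt_iff_lt_swap (σ.injective.ne hne) ?_ (h_old_new x).2⟩
    · simpa only [g_succAbove, g_same] using hc x
    · simpa only [g_succAbove, g_same] using q.2.injective.ne (hc x)
  have h_all s t : Preserves s t := by
    rcases eq_or_ne s j with rfl | hs <;> rcases eq_or_ne t s with rfl | ht
    · simp [Preserves]
    · obtain ⟨y, rfl⟩ := Fin.exists_succAbove_eq ht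
      exact h_new_old y
    · simp [Preserves]
    · obtain ⟨x, rfl⟩ := Fin.exists_succAbove_eq hs
      rcases eq_or_ne t j with rfl | ht'
      · exact h_old_new x
      · obtain ⟨y, rfl⟩ := Fin.exists_succAbove_eq ht'
        exact h_old x y
  exact ⟨fun s t hst => (h_all s t).1.1 hst, fun s t => (h_all s t).2⟩

/-- `ext r` is `r` with one new point added at a corner of its diagram: at the last position if
`isLast` holds (else the first), with the largest value if `isMax` holds (else the smallest). -/
structure CornerExtension (ext : Pattern → Pattern) (isLast isMax : Prop) where
  card_eq : ∀ r, (ext r).1 = r.1 + 1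
  emb : ∀ r, Fin r.1 → Fin (ext r).1
  corner : ∀ r, Fin (ext r).1
  isOccurrence_emb : ∀ r, IsOccurrence r (ext r) (emb r)
  emb_ne_corner : ∀ r x, emb r x ≠ corner r
  exists_emb_eq : ∀ r y, y ≠ corner r → ∃ x, emb r x = y
  isEndpoint_corner : ∀ r, IsEndpoint isLast (corner r)
  isEndpoint_value_corner : ∀ r, IsEndpoint isMax ((ext r).2 (corner r))

namespace CornerExtension

variable {ext : Pattern → Pattern} {isLast isMax : Prop}

theorem eq_ext_erase (E : CornerExtension ext isLast isMax) {n : ℕ} {σ : Perm (Fin (n + 1))}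
    {j : Fin (n + 1)} (hj : IsEndpoint isLast j) (hσj : IsEndpoint isMax (σ j)) :
    (⟨n + 1, σ⟩ : Pattern) = ext ⟨n, σ.erase j⟩ := by
  set p' : Pattern := ⟨n, σ.erase j⟩
  refine (isOccurrence_insertNth (E.isOccurrence_emb p') (E.emb_ne_corner p') (fun x => ?_)
    (fun x => ?_)).eq_of_card_eq (E.card_eq p').symm
  · rw [hj _ (j.succAbove_ne x), E.isEndpoint_corner p' _ (E.emb_ne_corner p' x)]
  · rw [hσj _ (σ.injective.ne (j.succAbove_ne x)),
      E.isEndpoint_value_corner p' _ ((ext p').2.injective.ne (E.emb_ne_corner p' x))]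

theorem contains_or_exists_eq_ext (E : CornerExtension ext isLast isMax) {p r : Pattern}
    (h : Contains p (ext r)) : Contains p r ∨ ∃ p', p = ext p' ∧ Contains p' r := by
  obtain ⟨f, hf⟩ : ∃ f, IsOccurrence p (ext r) f := h
  have hemb := E.isOccurrence_emb r
  by_cases hhit : ∃ j, f j = E.corner r
  · obtain ⟨j, hj⟩ := hhit
    obtain ⟨_ | n, σ⟩ := p
    · exact j.elim0
    have hjσ : IsEndpoint isMax (σ j) :=
      hf.isEndpoint_value_of_apply (hj ▸ E.isEndpoint_value_corner r)
    have hj' : IsEndpoint isLast j := hf.isEndpoint_of_apply (hj ▸ E.isEndpoint_corner r)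
    refine .inr ⟨_, E.eq_ext_erase hj' hjσ, ?_⟩
    refine hemb.contains_of_forall_mem_range ((isOccurrence_succAbove σ j).comp hf) fun x => ?_
    exact E.exists_emb_eq r _ (hj ▸ hf.1.injective.ne (j.succAbove_ne x))
  · push Not at hhit
    exact .inl (hemb.contains_of_forall_mem_range hf fun t => E.exists_emb_eq r _ (hhit t))

theorem inX_of_contains (E : CornerExtension ext isLast isMax) (hext : ∀ r, InX r → InX (ext r))
    {p r : Pattern}
    (ih : ∀ p, Contains p r → 0 < p.1 → InX p) (h : Contains p (ext r)) (hp : 0 < p.1) :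
    InX p := by
  rcases E.contains_or_exists_eq_ext h with h | ⟨p', rfl, h'⟩
  · exact ih p h hp
  rcases Nat.eq_zero_or_pos p'.1 with h0 | h0
  · rw [eq_onePat_of_card_eq_one (p := ext p') (by rw [E.card_eq, h0])]
    exact .base
  · exact hext p' (ih p' h' h0)

end CornerExtension

section

variable {m n : ℕ} (α : Perm (Fin m)) (β : Perm (Fin n))

@[simp]
theorem sumPerm_castAdd (x : Fin m) : sumPerm α β (Fin.castAdd n x) = Fin.castAdd n (α x) := by
  simp [sumPerm]

@[simp]
theorem sumPerm_natAdd (y : Fin n) : sumPerm α β (Fin.natAdd m y) = Fin.natAdd m (β y) := by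
  simp [sumPerm]

@[simp]
theorem val_skewPerm_castAdd (x : Fin m) : (skewPerm α β (Fin.castAdd n x) : ℕ) = n + α x := by
  simp [skewPerm, Nat.add_comm]

@[simp]
theorem val_skewPerm_natAdd (y : Fin n) : (skewPerm α β (Fin.natAdd m y) : ℕ) = β y := by
  simp [skewPerm]

end

section

variable (p q : Pattern)

theorem isOccurrence_sumP_castAdd : IsOccurrence p (sumP p q) (Fin.castAdd q.1) :=
  ⟨Fin.strictMono_castAdd q.1, fun s t => by
    show _ ↔ sumPerm p.2 q.2 (Fin.castAdd q.1 s) < sumPerm p.2 q.2 (Fin.castAdd q.1 t)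
    rw [sumPerm_castAdd, sumPerm_castAdd, (Fin.strictMono_castAdd q.1).lt_iff_lt]⟩

theorem isOccurrence_sumP_natAdd : IsOccurrence q (sumP p q) (Fin.natAdd p.1) :=
  ⟨Fin.strictMono_natAdd p.1, fun s t => by
    show _ ↔ sumPerm p.2 q.2 (Fin.natAdd p.1 s) < sumPerm p.2 q.2 (Fin.natAdd p.1 t)
    simp⟩

theorem isOccurrence_skewP_castAdd : IsOccurrence p (skewP p q) (Fin.castAdd q.1) :=
  ⟨Fin.strictMono_castAdd q.1, fun s t => by
    show _ ↔ skewPerm p.2 q.2 (Fin.castAdd q.1 s) < skewPerm p.2 q.2 (Fin.castAdd q.1 t)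
    simp only [Fin.lt_def, val_skewPerm_castAdd, Nat.add_lt_add_iff_left]⟩

theorem isOccurrence_skewP_natAdd : IsOccurrence q (skewP p q) (Fin.natAdd p.1) :=
  ⟨Fin.strictMono_natAdd p.1, fun s t => by
    show _ ↔ skewPerm p.2 q.2 (Fin.natAdd p.1 s) < skewPerm p.2 q.2 (Fin.natAdd p.1 t)
    simp only [Fin.lt_def, val_skewPerm_natAdd]⟩

end

namespace CornerExtension

def sumL : CornerExtension (sumP onePat) False False where
  card_eq r := Nat.add_comm 1 r.1
  emb _ := Fin.natAdd 1
  corner r := Fin.castAdd r.1 (0 : Fin 1)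
  isOccurrence_emb r := isOccurrence_sumP_natAdd onePat r
  emb_ne_corner _ _ := by simp [sumP, onePat, Fin.ext_iff]
  exists_emb_eq _ y hy := by
    dsimp only [sumP, onePat] at y hy ⊢
    have : (y : ℕ) ≠ 0 := fun h => hy (Fin.ext h)
    exact ⟨⟨y - 1, by omega⟩, Fin.ext (by simp; omega)⟩
  isEndpoint_corner _ := isEndpoint_false_of_val_eq_zero rfl
  isEndpoint_value_corner r := isEndpoint_false_of_val_eq_zero <| by
    show (sumPerm (1 : Perm (Fin 1)) r.2 (Fin.castAdd r.1 0) : ℕ) = 0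
    simp

def skewL : CornerExtension (skewP onePat) False True where
  card_eq r := Nat.add_comm 1 r.1
  emb _ := Fin.natAdd 1
  corner r := Fin.castAdd r.1 (0 : Fin 1)
  isOccurrence_emb r := isOccurrence_skewP_natAdd onePat r
  emb_ne_corner _ _ := by simp [skewP, onePat, Fin.ext_iff]
  exists_emb_eq _ y hy := by
    dsimp only [skewP, onePat] at y hy ⊢
    have : (y : ℕ) ≠ 0 := fun h => hy (Fin.ext h)
    exact ⟨⟨y - 1, by omega⟩, Fin.ext (by simp; omega)⟩
  isEndpoint_corner _ := isEndpoint_false_of_val_eq_zero rfl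
  isEndpoint_value_corner r := isEndpoint_true_of_val_add_one_eq <| by
    show (skewPerm (1 : Perm (Fin 1)) r.2 (Fin.castAdd r.1 0) : ℕ) + 1 = 1 + r.1
    simp [Nat.add_comm]

def sumR : CornerExtension (fun r => sumP r onePat) True True where
  card_eq _ := rfl
  emb _ := Fin.castAdd 1
  corner r := Fin.natAdd r.1 (0 : Fin 1)
  isOccurrence_emb r := isOccurrence_sumP_castAdd r onePat
  emb_ne_corner _ x := by simp [sumP, onePat, Fin.ext_iff]; omega
  exists_emb_eq r y hy := by
    dsimp only [sumP, onePat] at y hy ⊢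
    have : (y : ℕ) ≠ r.1 := fun h => hy (Fin.ext h)
    exact ⟨⟨y, by omega⟩, Fin.ext (by simp)⟩
  isEndpoint_corner _ := isEndpoint_true_of_val_add_one_eq rfl
  isEndpoint_value_corner r := isEndpoint_true_of_val_add_one_eq <| by
    show (sumPerm r.2 (1 : Perm (Fin 1)) (Fin.natAdd r.1 0) : ℕ) + 1 = r.1 + 1
    simp

def skewR : CornerExtension (fun r => skewP r onePat) True False where
  card_eq _ := rfl
  emb _ := Fin.castAdd 1
  corner r := Fin.natAdd r.1 (0 : Fin 1)
  isOccurrence_emb r := isOccurrence_skewP_castAdd r onePat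
  emb_ne_corner _ x := by simp [skewP, onePat, Fin.ext_iff]; omega
  exists_emb_eq r y hy := by
    dsimp only [skewP, onePat] at y hy ⊢
    have : (y : ℕ) ≠ r.1 := fun h => hy (Fin.ext h)
    exact ⟨⟨y, by omega⟩, Fin.ext (by simp)⟩
  isEndpoint_corner _ := isEndpoint_true_of_val_add_one_eq rfl
  isEndpoint_value_corner r := isEndpoint_false_of_val_eq_zero <| by
    show (skewPerm r.2 (1 : Perm (Fin 1)) (Fin.natAdd r.1 0) : ℕ) = 0
    simp

end CornerExtension

/-- the class X is closed under pattern containment (for nonempty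
permutations; the closure of {1} contains no empty permutation). -/
theorem InX_closed_under_containment (p q : Pattern)
    (hq : InX q) (hpq : Contains p q) (hne : 0 < p.1) : InX p := by
  induction hq generalizing p with
  | base =>
    obtain ⟨f, hf, -⟩ := hpq
    rw [eq_onePat_of_card_eq_one (le_antisymm (Fin.le_of_injective f hf.injective) hne)]
    exact .base
  | sumL _ ih => exact CornerExtension.sumL.inX_of_contains (fun _ => .sumL) ih hpq hne
  | skewL _ ih => exact CornerExtension.skewL.inX_of_contains (fun _ => .skewL) ih hpq hne
  | sumR _ ih => exact CornerExtension.sumR.inX_of_contains (fun _ => .sumR) ih hpq hne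
  | skewR _ ih => exact CornerExtension.skewR.inX_of_contains (fun _ => .skewR) ih hpq hne
end

section
/- The growth rate of the class X exists and equals 2 + √2, i.e., x_n^{1/n} → 2 + √2 as n → ∞, where x_n is the number of permutations of size n in X. -/
open Equiv Filter

/-- Membership in X, with the empty permutation included (for size 0). -/
def InX0 (p : Pattern) : Prop := InX p ∨ p.1 = 0

/-- The number of permutations of size n in the class X. -/
noncomputable def xcount (n : ℕ) : ℕ :=
  Nat.card {σ : Equiv.Perm (Fin n) // InX0 ⟨n, σ⟩}

lemma symm_eq {m k : ℕ} (i : Fin (m+k)) :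
    finSumFinEquiv.symm i =
      if h : (i:ℕ) < m then Sum.inl ⟨i, h⟩ else Sum.inr ⟨(i:ℕ) - m, by omega⟩ := by
  rw [Equiv.symm_apply_eq]
  split_ifs with h
  · ext; simp [Fin.castAdd, Fin.castLE]
  · ext; simp [Fin.natAdd]; omega

lemma sumPerm_val {m k : ℕ} (α : Perm (Fin m)) (β : Perm (Fin k)) (i : Fin (m+k)) :
    ((sumPerm α β) i : ℕ) =
      if h : (i:ℕ) < m then (α ⟨i,h⟩ : ℕ) else m + (β ⟨(i:ℕ) - m, by omega⟩ : ℕ) := by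
  rw [sumPerm]; simp [symm_eq]; split_ifs <;> simp [Fin.castAdd, Fin.castLE, Fin.natAdd]

lemma skewPerm_val {m k : ℕ} (α : Perm (Fin m)) (β : Perm (Fin k)) (i : Fin (m+k)) :
    ((skewPerm α β) i : ℕ) =
      if h : (i:ℕ) < m then k + (α ⟨i,h⟩ : ℕ) else (β ⟨(i:ℕ) - m, by omega⟩ : ℕ) := by
  rw [skewPerm]; simp [symm_eq]; split_ifs <;> simp [Fin.castAdd, Fin.castLE, Fin.natAdd]

variable {n : ℕ} (σ : Perm (Fin n))
def F1 (σ : Perm (Fin n)) : Perm (Fin (n+1)) :=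
  (finCongr (Nat.add_comm 1 n)).permCongr (sumPerm 1 σ)
def F2 (σ : Perm (Fin n)) : Perm (Fin (n+1)) :=
  (finCongr (Nat.add_comm 1 n)).permCongr (skewPerm 1 σ)
def F3 (σ : Perm (Fin n)) : Perm (Fin (n+1)) := sumPerm σ 1
def F4 (σ : Perm (Fin n)) : Perm (Fin (n+1)) := skewPerm σ 1

lemma F1_val (i : Fin (n+1)) :
    (F1 σ i : ℕ) = if h : (i:ℕ) = 0 then 0 else (σ ⟨(i:ℕ)-1, by have := i.isLt; omega⟩ : ℕ) + 1 := by
  simp only [F1, Equiv.permCongr_apply, finCongr_symm, finCongr_apply]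
  rw [Fin.coe_cast, sumPerm_val]
  simp only [Fin.coe_cast]
  have hlt := i.isLt
  split_ifs with h h1 h2 <;> first | (simp; omega) | omega | (exfalso; omega) | (have hs := (σ ⟨(i:ℕ)-1, by omega⟩).isLt; omega)

lemma F2_val (i : Fin (n+1)) :
    (F2 σ i : ℕ) = if h : (i:ℕ) = 0 then n else (σ ⟨(i:ℕ)-1, by have := i.isLt; omega⟩ : ℕ) := by
  simp only [F2, Equiv.permCongr_apply, finCongr_symm, finCongr_apply]
  rw [Fin.coe_cast, skewPerm_val]
  simp only [Fin.coe_cast]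
  have hlt := i.isLt
  split_ifs with h h1 h2 <;> first | (simp; omega) | omega | (exfalso; omega) | (have hs := (σ ⟨(i:ℕ)-1, by omega⟩).isLt; omega)

lemma F3_val (i : Fin (n+1)) :
    (F3 σ i : ℕ) = if h : (i:ℕ) < n then (σ ⟨(i:ℕ), h⟩ : ℕ) else n := by
  rw [F3, sumPerm_val]
  have hlt := i.isLt
  split_ifs with h h1 <;> first | rfl | simp | omega

lemma F4_val (i : Fin (n+1)) :
    (F4 σ i : ℕ) = if h : (i:ℕ) < n then (σ ⟨(i:ℕ), h⟩ : ℕ) + 1 else 0 := by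
  rw [F4, skewPerm_val]
  have hlt := i.isLt
  split_ifs with h h1 <;> first | omega | simp | (simp; omega)

lemma pattern_cast {m k : ℕ} (h : m = k) (π : Equiv.Perm (Fin m)) :
    (⟨m, π⟩ : Pattern) = ⟨k, (finCongr h).permCongr π⟩ := by subst h; simp; rfl

variable {n : ℕ} {σ : Perm (Fin n)}

lemma inX_F1 (h : InX ⟨n, σ⟩) : InX ⟨n+1, F1 σ⟩ := by
  have h2 := InX.sumL h
  have he : sumP onePat ⟨n, σ⟩ = ⟨n+1, F1 σ⟩ := pattern_cast (Nat.add_comm 1 n) (sumPerm 1 σ)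
  rwa [he] at h2

lemma inX_F2 (h : InX ⟨n, σ⟩) : InX ⟨n+1, F2 σ⟩ := by
  have h2 := InX.skewL h
  have he : skewP onePat ⟨n, σ⟩ = ⟨n+1, F2 σ⟩ := pattern_cast (Nat.add_comm 1 n) (skewPerm 1 σ)
  rwa [he] at h2

lemma inX_F3 (h : InX ⟨n, σ⟩) : InX ⟨n+1, F3 σ⟩ := InX.sumR h

lemma inX_F4 (h : InX ⟨n, σ⟩) : InX ⟨n+1, F4 σ⟩ := InX.skewR h

lemma inX_one (τ : Perm (Fin 1)) : InX ⟨1, τ⟩ := by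
  have : τ = (1 : Perm (Fin 1)) := Subsingleton.elim _ _
  rw [this]; exact InX.base

lemma inX0_F1 (h : InX0 ⟨n, σ⟩) : InX ⟨n+1, F1 σ⟩ := by
  rcases h with h | h
  · exact inX_F1 h
  · simp only at h; subst h; exact inX_one _

lemma inX0_F2 (h : InX0 ⟨n, σ⟩) : InX ⟨n+1, F2 σ⟩ := by
  rcases h with h | h
  · exact inX_F2 h
  · simp only at h; subst h; exact inX_one _

lemma inX0_F3 (h : InX0 ⟨n, σ⟩) : InX ⟨n+1, F3 σ⟩ := by
  rcases h with h | h
  · exact inX_F3 h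
  · simp only at h; subst h; exact inX_one _

lemma inX0_F4 (h : InX0 ⟨n, σ⟩) : InX ⟨n+1, F4 σ⟩ := by
  rcases h with h | h
  · exact inX_F4 h
  · simp only at h; subst h; exact inX_one _

lemma inX_succ_iff (hn : 1 ≤ n) (τ : Perm (Fin (n+1))) :
    InX ⟨n+1, τ⟩ ↔ ∃ σ : Perm (Fin n), InX ⟨n, σ⟩ ∧
      (τ = F1 σ ∨ τ = F2 σ ∨ τ = F3 σ ∨ τ = F4 σ) := by
  constructor
  · intro h
    generalize hq : (⟨n+1, τ⟩ : Pattern) = q at h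
    induction h with
    | base =>
        exfalso
        have h1 : n + 1 = 1 := congrArg Sigma.fst hq
        omega
    | @sumL p hp ih =>
        obtain ⟨m, ρ⟩ := p
        have h1 : n + 1 = 1 + m := congrArg Sigma.fst hq
        have hm : n = m := by omega
        subst hm
        have h2 : (⟨n+1, τ⟩ : Pattern) = ⟨n+1, F1 ρ⟩ :=
          hq.trans (pattern_cast (Nat.add_comm 1 n) (sumPerm 1 ρ))
        exact ⟨ρ, hp, Or.inl (eq_of_heq (Sigma.mk.inj_iff.mp h2).2)⟩
    | @skewL p hp ih =>
        obtain ⟨m, ρ⟩ := p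
        have h1 : n + 1 = 1 + m := congrArg Sigma.fst hq
        have hm : n = m := by omega
        subst hm
        have h2 : (⟨n+1, τ⟩ : Pattern) = ⟨n+1, F2 ρ⟩ :=
          hq.trans (pattern_cast (Nat.add_comm 1 n) (skewPerm 1 ρ))
        exact ⟨ρ, hp, Or.inr (Or.inl (eq_of_heq (Sigma.mk.inj_iff.mp h2).2))⟩
    | @sumR p hp ih =>
        obtain ⟨m, ρ⟩ := p
        have h1 : n + 1 = m + 1 := congrArg Sigma.fst hq
        have hm : n = m := by omega
        subst hm
        exact ⟨ρ, hp, Or.inr (Or.inr (Or.inl (eq_of_heq (Sigma.mk.inj_iff.mp hq).2)))⟩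
    | @skewR p hp ih =>
        obtain ⟨m, ρ⟩ := p
        have h1 : n + 1 = m + 1 := congrArg Sigma.fst hq
        have hm : n = m := by omega
        subst hm
        exact ⟨ρ, hp, Or.inr (Or.inr (Or.inr (eq_of_heq (Sigma.mk.inj_iff.mp hq).2)))⟩
  · rintro ⟨σ, hσ, (rfl | rfl | rfl | rfl)⟩
    exacts [inX_F1 hσ, inX_F2 hσ, inX_F3 hσ, inX_F4 hσ]

lemma F1_val_succ {σ : Perm (Fin n)} (j : ℕ) (hj : j < n) :
    (F1 σ ⟨j+1, by omega⟩ : ℕ) = (σ ⟨j, hj⟩ : ℕ) + 1 := by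
  rw [F1_val]
  simp

lemma F2_val_succ {σ : Perm (Fin n)} (j : ℕ) (hj : j < n) :
    (F2 σ ⟨j+1, by omega⟩ : ℕ) = (σ ⟨j, hj⟩ : ℕ) := by
  rw [F2_val]
  simp

lemma F3_val_lt {σ : Perm (Fin n)} (j : ℕ) (hj : j < n) :
    (F3 σ ⟨j, by omega⟩ : ℕ) = (σ ⟨j, hj⟩ : ℕ) := by
  rw [F3_val, dif_pos hj]

lemma F4_val_lt {σ : Perm (Fin n)} (j : ℕ) (hj : j < n) :
    (F4 σ ⟨j, by omega⟩ : ℕ) = (σ ⟨j, hj⟩ : ℕ) + 1 := by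
  rw [F4_val, dif_pos hj]

lemma F1_inj : Function.Injective (F1 (n:=n)) := by
  intro σ σ' h
  apply Equiv.ext; intro i
  have hv : (F1 σ ⟨(i:ℕ)+1, by have := i.isLt; omega⟩ : ℕ) = (F1 σ' ⟨(i:ℕ)+1, by have := i.isLt; omega⟩ : ℕ) := by rw [h]
  rw [F1_val_succ _ i.isLt, F1_val_succ _ i.isLt] at hv
  apply Fin.ext
  simpa [Fin.eta] using hv

lemma F2_inj : Function.Injective (F2 (n:=n)) := by
  intro σ σ' h
  apply Equiv.ext; intro i
  have hv : (F2 σ ⟨(i:ℕ)+1, by have := i.isLt; omega⟩ : ℕ) = (F2 σ' ⟨(i:ℕ)+1, by have := i.isLt; omega⟩ : ℕ) := by rw [h]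
  rw [F2_val_succ _ i.isLt, F2_val_succ _ i.isLt] at hv
  apply Fin.ext
  simpa [Fin.eta] using hv

lemma F3_inj : Function.Injective (F3 (n:=n)) := by
  intro σ σ' h
  apply Equiv.ext; intro i
  have hv : (F3 σ ⟨(i:ℕ), by have := i.isLt; omega⟩ : ℕ) = (F3 σ' ⟨(i:ℕ), by have := i.isLt; omega⟩ : ℕ) := by rw [h]
  rw [F3_val_lt _ i.isLt, F3_val_lt _ i.isLt] at hv
  apply Fin.ext
  simpa [Fin.eta] using hv

lemma F4_inj : Function.Injective (F4 (n:=n)) := by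
  intro σ σ' h
  apply Equiv.ext; intro i
  have hv : (F4 σ ⟨(i:ℕ), by have := i.isLt; omega⟩ : ℕ) = (F4 σ' ⟨(i:ℕ), by have := i.isLt; omega⟩ : ℕ) := by rw [h]
  rw [F4_val_lt _ i.isLt, F4_val_lt _ i.isLt] at hv
  apply Fin.ext
  simpa [Fin.eta] using hv

lemma F1_val_zero {σ : Perm (Fin n)} : (F1 σ ⟨0, by omega⟩ : ℕ) = 0 := by
  rw [F1_val, dif_pos rfl]
lemma F2_val_zero {σ : Perm (Fin n)} : (F2 σ ⟨0, by omega⟩ : ℕ) = n := by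
  rw [F2_val, dif_pos rfl]
lemma F3_val_ge {σ : Perm (Fin n)} (j : ℕ) (h1 : j < n+1) (h2 : ¬ j < n) :
    (F3 σ ⟨j, h1⟩ : ℕ) = n := by rw [F3_val, dif_neg h2]
lemma F4_val_ge {σ : Perm (Fin n)} (j : ℕ) (h1 : j < n+1) (h2 : ¬ j < n) :
    (F4 σ ⟨j, h1⟩ : ℕ) = 0 := by rw [F4_val, dif_neg h2]

lemma F1F3_comm {m : ℕ} (ρ : Perm (Fin m)) : F1 (F3 ρ) = F3 (F1 ρ) := by
  apply Equiv.ext; intro i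
  apply Fin.ext
  have hi := i.isLt
  rcases Nat.eq_zero_or_pos (i:ℕ) with h0 | h0
  · have hi' : i = ⟨0, Nat.succ_pos _⟩ := Fin.ext h0
    rw [hi', F1_val_zero, F3_val_lt 0 (Nat.succ_pos _), F1_val_zero]
  · rcases Nat.lt_or_ge (i:ℕ) (m+1) with hlt | hge
    · have h1 : (i:ℕ)-1 < m+1 := by omega
      have h2 : (i:ℕ)-1 < m := by omega
      have h3 : (i:ℕ)-1+1 < m+1 := by omega
      have hi' : i = ⟨((i:ℕ)-1)+1, by omega⟩ :=
        Fin.ext (by omega : (i:ℕ) = (i:ℕ)-1+1)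
      rw [hi', F1_val_succ ((i:ℕ)-1) h1, F3_val_lt ((i:ℕ)-1) h2,
        F3_val_lt ((i:ℕ)-1+1) h3, F1_val_succ ((i:ℕ)-1) h2]
    · have hi' : i = ⟨m+1, by omega⟩ :=
        Fin.ext (by omega : (i:ℕ) = m+1)
      rw [hi', F1_val_succ m (by omega), F3_val_ge m (by omega) (by omega),
        F3_val_ge (m+1) (by omega) (by omega)]

lemma F2F4_comm {m : ℕ} (ρ : Perm (Fin m)) : F2 (F4 ρ) = F4 (F2 ρ) := by
  apply Equiv.ext; intro i
  apply Fin.ext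
  have hi := i.isLt
  rcases Nat.eq_zero_or_pos (i:ℕ) with h0 | h0
  · have hi' : i = ⟨0, Nat.succ_pos _⟩ := Fin.ext h0
    rw [hi', F2_val_zero, F4_val_lt 0 (Nat.succ_pos _), F2_val_zero]
  · rcases Nat.lt_or_ge (i:ℕ) (m+1) with hlt | hge
    · have h1 : (i:ℕ)-1 < m+1 := by omega
      have h2 : (i:ℕ)-1 < m := by omega
      have h3 : (i:ℕ)-1+1 < m+1 := by omega
      have hi' : i = ⟨((i:ℕ)-1)+1, by omega⟩ :=
        Fin.ext (by omega : (i:ℕ) = (i:ℕ)-1+1)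
      rw [hi', F2_val_succ ((i:ℕ)-1) h1, F4_val_lt ((i:ℕ)-1) h2,
        F4_val_lt ((i:ℕ)-1+1) h3, F2_val_succ ((i:ℕ)-1) h2]
    · have hi' : i = ⟨m+1, by omega⟩ :=
        Fin.ext (by omega : (i:ℕ) = m+1)
      rw [hi', F2_val_succ m (by omega), F4_val_ge m (by omega) (by omega),
        F4_val_ge (m+1) (by omega) (by omega)]

lemma ends_max_decomp {n : ℕ} : ∀ (σ : Perm (Fin (n+1))), InX ⟨n+1, σ⟩ →
    (σ ⟨n, by omega⟩ : ℕ) = n → ∃ ρ : Perm (Fin n), InX0 ⟨n, ρ⟩ ∧ σ = F3 ρ := by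
  induction n with
  | zero =>
      intro σ _ _
      refine ⟨1, Or.inr rfl, ?_⟩
      apply Equiv.ext; intro i
      apply Fin.ext
      have h1 := (σ i).isLt
      have h2 := ((F3 (1 : Perm (Fin 0))) i).isLt
      omega
  | succ m ih =>
      intro σ hσ hend
      obtain ⟨ρ, hρ, hcase⟩ := (inX_succ_iff (by omega) σ).1 hσ
      rcases hcase with rfl | rfl | rfl | rfl
      · rw [F1_val_succ m (by omega)] at hend
        obtain ⟨ρ', hρ', rfl⟩ := ih ρ hρ (Nat.succ_injective hend)
        exact ⟨F1 ρ', Or.inl (inX0_F1 hρ'), F1F3_comm ρ'⟩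
      · rw [F2_val_succ m (by omega)] at hend
        have := (ρ ⟨m, by omega⟩).isLt
        omega
      · exact ⟨ρ, Or.inl hρ, rfl⟩
      · rw [F4_val_ge (m+1) (by omega) (by omega)] at hend
        omega

lemma ends_min_decomp {n : ℕ} : ∀ (σ : Perm (Fin (n+1))), InX ⟨n+1, σ⟩ →
    (σ ⟨n, by omega⟩ : ℕ) = 0 → ∃ ρ : Perm (Fin n), InX0 ⟨n, ρ⟩ ∧ σ = F4 ρ := by
  induction n with
  | zero =>
      intro σ _ _
      refine ⟨1, Or.inr rfl, ?_⟩
      apply Equiv.ext; intro i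
      apply Fin.ext
      have h1 := (σ i).isLt
      have h2 := ((F4 (1 : Perm (Fin 0))) i).isLt
      omega
  | succ m ih =>
      intro σ hσ hend
      obtain ⟨ρ, hρ, hcase⟩ := (inX_succ_iff (by omega) σ).1 hσ
      rcases hcase with rfl | rfl | rfl | rfl
      · rw [F1_val_succ m (by omega)] at hend
        omega
      · rw [F2_val_succ m (by omega)] at hend
        obtain ⟨ρ', hρ', rfl⟩ := ih ρ hρ hend
        exact ⟨F2 ρ', Or.inl (inX0_F2 hρ'), F2F4_comm ρ'⟩
      · rw [F3_val_ge (m+1) (by omega) (by omega)] at hend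
        omega
      · exact ⟨ρ, Or.inl hρ, rfl⟩

def XS (n : ℕ) : Set (Perm (Fin n)) := {σ | InX ⟨n, σ⟩}
def X0S (n : ℕ) : Set (Perm (Fin n)) := {σ | InX0 ⟨n, σ⟩}

lemma xcount_eq_ncard (n : ℕ) : xcount n = (X0S n).ncard := by
  rw [xcount, ← Nat.card_coe_set_eq]
  rfl

lemma X0S_eq_XS {n : ℕ} (h : 1 ≤ n) : X0S n = XS n := by
  ext σ
  simp only [X0S, XS, Set.mem_setOf_eq, InX0]
  constructor
  · rintro (h1 | h1)
    · exact h1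
    · omega
  · exact Or.inl

lemma xcount_eq_ncard_XS {n : ℕ} (h : 1 ≤ n) : xcount n = (XS n).ncard := by
  rw [xcount_eq_ncard, X0S_eq_XS h]

lemma xcount_zero : xcount 0 = 1 := by
  haveI : Unique {σ : Perm (Fin 0) // InX0 ⟨0, σ⟩} :=
    { default := ⟨1, Or.inr rfl⟩,
      uniq := fun a => Subtype.ext (by apply Equiv.ext; intro i; exact i.elim0) }
  rw [xcount]
  exact Nat.card_unique

lemma xcount_one : xcount 1 = 1 := by
  haveI : Unique {σ : Perm (Fin 1) // InX0 ⟨1, σ⟩} :=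
    { default := ⟨1, Or.inl (inX_one _)⟩,
      uniq := fun a => Subtype.ext (by
        apply Equiv.ext; intro i
        apply Fin.ext
        have h1 := ((a : Perm (Fin 1)) i).isLt
        have h2 := ((1 : Perm (Fin 1)) i).isLt
        omega) }
  rw [xcount]
  exact Nat.card_unique

lemma xcount_rec (m : ℕ) : xcount (m+2) + 2 * xcount m = 4 * xcount (m+1) := by
  classical
  set A : Set (Perm (Fin (m+2))) := F1 '' XS (m+1) with hA
  set B : Set (Perm (Fin (m+2))) := F2 '' XS (m+1) with hB
  set C : Set (Perm (Fin (m+2))) := F3 '' XS (m+1) with hC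
  set D : Set (Perm (Fin (m+2))) := F4 '' XS (m+1) with hD
  -- value facts
  have hA0 : ∀ τ ∈ A, (τ ⟨0, by omega⟩ : ℕ) = 0 := by
    rintro τ ⟨σ, _, rfl⟩; exact F1_val_zero
  have hB0 : ∀ τ ∈ B, (τ ⟨0, by omega⟩ : ℕ) = m+1 := by
    rintro τ ⟨σ, _, rfl⟩; exact F2_val_zero
  have hCl : ∀ τ ∈ C, (τ ⟨m+1, by omega⟩ : ℕ) = m+1 := by
    rintro τ ⟨σ, _, rfl⟩; exact F3_val_ge (m+1) (by omega) (by omega)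
  have hDl : ∀ τ ∈ D, (τ ⟨m+1, by omega⟩ : ℕ) = 0 := by
    rintro τ ⟨σ, _, rfl⟩; exact F4_val_ge (m+1) (by omega) (by omega)
  -- union decomposition
  have hXS : XS (m+2) = (A ∪ B) ∪ (C ∪ D) := by
    ext τ
    constructor
    · intro hτ
      obtain ⟨σ, hσ, hcase⟩ := (inX_succ_iff (by omega) τ).1 hτ
      rcases hcase with rfl | rfl | rfl | rfl
      · exact Or.inl (Or.inl ⟨σ, hσ, rfl⟩)
      · exact Or.inl (Or.inr ⟨σ, hσ, rfl⟩)
      · exact Or.inr (Or.inl ⟨σ, hσ, rfl⟩)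
      · exact Or.inr (Or.inr ⟨σ, hσ, rfl⟩)
    · rintro ((⟨σ, hσ, rfl⟩ | ⟨σ, hσ, rfl⟩) | (⟨σ, hσ, rfl⟩ | ⟨σ, hσ, rfl⟩))
      exacts [inX_F1 hσ, inX_F2 hσ, inX_F3 hσ, inX_F4 hσ]
  -- disjointness
  have hABdisj : ∀ τ, τ ∈ A → τ ∈ B → False := by
    intro τ h1 h2
    have := hA0 τ h1; have := hB0 τ h2; omega
  have hCDdisj : ∀ τ, τ ∈ C → τ ∈ D → False := by
    intro τ h1 h2
    have := hCl τ h1; have := hDl τ h2; omega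
  have hADdisj : ∀ τ, τ ∈ A → τ ∈ D → False := by
    intro τ h1 h2
    have e1 := hA0 τ h1; have e2 := hDl τ h2
    have : τ ⟨0, by omega⟩ = τ ⟨m+1, by omega⟩ := Fin.ext (by
      have b1 := (τ ⟨0, by omega⟩).isLt
      omega)
    have := τ.injective this
    have := congrArg Fin.val this
    simp at this
  have hBCdisj : ∀ τ, τ ∈ B → τ ∈ C → False := by
    intro τ h1 h2
    have e1 := hB0 τ h1; have e2 := hCl τ h2
    have : τ ⟨0, by omega⟩ = τ ⟨m+1, by omega⟩ := Fin.ext (by omega)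
    have := τ.injective this
    have := congrArg Fin.val this
    simp at this
  -- intersections
  have hAC : A ∩ C = (fun ρ : Perm (Fin m) => F3 (F1 ρ)) '' X0S m := by
    ext τ
    constructor
    · rintro ⟨⟨σ, hσ, rfl⟩, hc⟩
      have hv := hCl _ hc
      rw [F1_val_succ m (by omega)] at hv
      obtain ⟨ρ, hρ, rfl⟩ := ends_max_decomp σ hσ (Nat.succ_injective hv)
      exact ⟨ρ, hρ, (F1F3_comm ρ).symm⟩
    · rintro ⟨ρ, hρ, rfl⟩
      constructor
      · exact ⟨F3 ρ, inX0_F3 hρ, F1F3_comm ρ⟩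
      · exact ⟨F1 ρ, inX0_F1 hρ, rfl⟩
  have hBD : B ∩ D = (fun ρ : Perm (Fin m) => F4 (F2 ρ)) '' X0S m := by
    ext τ
    constructor
    · rintro ⟨⟨σ, hσ, rfl⟩, hd⟩
      have hv := hDl _ hd
      rw [F2_val_succ m (by omega)] at hv
      obtain ⟨ρ, hρ, rfl⟩ := ends_min_decomp σ hσ hv
      exact ⟨ρ, hρ, (F2F4_comm ρ).symm⟩
    · rintro ⟨ρ, hρ, rfl⟩
      constructor
      · exact ⟨F4 ρ, inX0_F4 hρ, F2F4_comm ρ⟩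
      · exact ⟨F2 ρ, inX0_F2 hρ, rfl⟩
  -- cardinalities
  have ha : (XS (m+1)).ncard = xcount (m+1) := (xcount_eq_ncard_XS (by omega)).symm
  have hcard_A : A.ncard = xcount (m+1) := by rw [hA, Set.ncard_image_of_injective _ F1_inj, ha]
  have hcard_B : B.ncard = xcount (m+1) := by rw [hB, Set.ncard_image_of_injective _ F2_inj, ha]
  have hcard_C : C.ncard = xcount (m+1) := by rw [hC, Set.ncard_image_of_injective _ F3_inj, ha]
  have hcard_D : D.ncard = xcount (m+1) := by rw [hD, Set.ncard_image_of_injective _ F4_inj, ha]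
  have hcard_AC : (A ∩ C).ncard = xcount m := by
    rw [hAC, Set.ncard_image_of_injective _ (fun a b h => F1_inj (F3_inj h)), xcount_eq_ncard]
  have hcard_BD : (B ∩ D).ncard = xcount m := by
    rw [hBD, Set.ncard_image_of_injective _ (fun a b h => F2_inj (F4_inj h)), xcount_eq_ncard]
  have hUnionAB : (A ∪ B).ncard = xcount (m+1) + xcount (m+1) := by
    rw [Set.ncard_union_eq (Set.disjoint_left.mpr (fun τ h1 h2 => hABdisj τ h1 h2))
      (Set.toFinite _) (Set.toFinite _), hcard_A, hcard_B]
  have hUnionCD : (C ∪ D).ncard = xcount (m+1) + xcount (m+1) := by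
    rw [Set.ncard_union_eq (Set.disjoint_left.mpr (fun τ h1 h2 => hCDdisj τ h1 h2))
      (Set.toFinite _) (Set.toFinite _), hcard_C, hcard_D]
  have hInter : (A ∪ B) ∩ (C ∪ D) = (A ∩ C) ∪ (B ∩ D) := by
    ext τ
    constructor
    · rintro ⟨(h1 | h1), (h2 | h2)⟩
      · exact Or.inl ⟨h1, h2⟩
      · exact absurd h2 (fun h => hADdisj τ h1 h)
      · exact absurd h2 (fun h => hBCdisj τ h1 h)
      · exact Or.inr ⟨h1, h2⟩
    · rintro (⟨h1, h2⟩ | ⟨h1, h2⟩)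
      · exact ⟨Or.inl h1, Or.inl h2⟩
      · exact ⟨Or.inr h1, Or.inr h2⟩
  have hInterCard : ((A ∪ B) ∩ (C ∪ D)).ncard = xcount m + xcount m := by
    rw [hInter, Set.ncard_union_eq ?disj (Set.toFinite _) (Set.toFinite _), hcard_AC, hcard_BD]
    case disj =>
      apply Set.disjoint_left.mpr
      rintro τ ⟨h1, _⟩ ⟨h2, _⟩
      exact hABdisj τ h1 h2
  have hkey := Set.ncard_union_add_ncard_inter (A ∪ B) (C ∪ D) (Set.toFinite _) (Set.toFinite _)
  rw [← hXS] at hkey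
  rw [hUnionAB, hUnionCD, hInterCard, ← xcount_eq_ncard_XS (show 1 ≤ m+2 by omega)] at hkey
  omega

lemma xcount_two : xcount 2 = 2 := by
  have h := xcount_rec 0
  norm_num [xcount_zero, xcount_one] at h
  omega

lemma two_xcount (n : ℕ) :
    2 * (xcount (n+1) : ℝ) = (2+Real.sqrt 2)^n + (2-Real.sqrt 2)^n := by
  have hsq : Real.sqrt 2 ^ 2 = 2 := Real.sq_sqrt (by norm_num)
  induction n using Nat.twoStepInduction with
  | zero => rw [xcount_one]; norm_num
  | one =>
      rw [xcount_two]
      ring_nf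
  | more n ih1 ih2 =>
      have hc := xcount_rec (n+1)
      have hcast : (xcount (n+3) : ℝ) + 2 * (xcount (n+1) : ℝ) = 4 * (xcount (n+2) : ℝ) := by
        exact_mod_cast hc
      have hr2 : (2+Real.sqrt 2)^2 = 4*(2+Real.sqrt 2) - 2 := by
        linear_combination hsq
      have hs2 : (2-Real.sqrt 2)^2 = 4*(2-Real.sqrt 2) - 2 := by
        linear_combination hsq
      have : 2 * (xcount (n+3) : ℝ) =
          (2+Real.sqrt 2)^(n+2) + (2-Real.sqrt 2)^(n+2) := by
        linear_combination (2:ℝ)*hcast - 2*ih1 + 4*ih2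
          - (2+Real.sqrt 2)^n * hr2 - (2-Real.sqrt 2)^n * hs2
      exact this

theorem xcount_growth_rate' :
    Filter.Tendsto (fun n : ℕ => (xcount n : ℝ) ^ ((n : ℝ)⁻¹))
      Filter.atTop (nhds (2 + Real.sqrt 2)) := by
  have hsqnn : (0:ℝ) ≤ Real.sqrt 2 := Real.sqrt_nonneg 2
  have hsq : Real.sqrt 2 ^ 2 = 2 := Real.sq_sqrt (by norm_num)
  have hs2lt : Real.sqrt 2 < 2 := by nlinarith
  set r : ℝ := 2 + Real.sqrt 2 with hrdef
  set s : ℝ := 2 - Real.sqrt 2 with hsdef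
  have hr0 : (0:ℝ) < r := by rw [hrdef]; linarith
  have hs0 : (0:ℝ) < s := by rw [hsdef]; linarith
  have hsr : s ≤ r := by rw [hrdef, hsdef]; linarith
  -- bounds
  have hub : ∀ n : ℕ, 1 ≤ n → (xcount n : ℝ) ≤ r^(n-1) := by
    intro n hn
    have h := two_xcount (n-1)
    rw [show n-1+1 = n by omega] at h
    have h2 : s^(n-1) ≤ r^(n-1) := pow_le_pow_left₀ hs0.le hsr _
    linarith
  have hlb : ∀ n : ℕ, 1 ≤ n → r^(n-1)/2 ≤ (xcount n : ℝ) := by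
    intro n hn
    have h := two_xcount (n-1)
    rw [show n-1+1 = n by omega] at h
    have h2 : (0:ℝ) ≤ s^(n-1) := pow_nonneg hs0.le _
    linarith
  -- limits
  have hinv : Tendsto (fun n : ℕ => ((n:ℝ))⁻¹) atTop (nhds 0) :=
    tendsto_inv_atTop_zero.comp tendsto_natCast_atTop_atTop
  have hexp : Tendsto (fun n : ℕ => ((n-1 : ℕ):ℝ) * ((n:ℝ))⁻¹) atTop (nhds 1) := by
    have h1 : Tendsto (fun n : ℕ => 1 - (n:ℝ)⁻¹) atTop (nhds 1) := by
      simpa using tendsto_const_nhds.sub hinv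
    apply h1.congr'
    filter_upwards [eventually_ge_atTop 1] with n hn
    have hne : (n:ℝ) ≠ 0 := by
      have : (1:ℝ) ≤ (n:ℝ) := by exact_mod_cast hn
      linarith
    have hc : ((n-1:ℕ):ℝ) = (n:ℝ) - 1 := by
      rw [Nat.cast_sub hn]; norm_num
    rw [hc]
    field_simp
  have hup : Tendsto (fun n : ℕ => ((r^(n-1):ℝ)) ^ ((n:ℝ)⁻¹)) atTop (nhds r) := by
    have h1 : Tendsto (fun n : ℕ => r ^ (((n-1:ℕ):ℝ) * (n:ℝ)⁻¹)) atTop (nhds (r ^ (1:ℝ))) :=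
      Filter.Tendsto.rpow tendsto_const_nhds hexp (Or.inl hr0.ne')
    rw [Real.rpow_one] at h1
    refine h1.congr (fun n => ?_)
    rw [← Real.rpow_natCast r (n-1), ← Real.rpow_mul hr0.le]
  have h2exp : Tendsto (fun n : ℕ => (2:ℝ) ^ ((n:ℝ)⁻¹)) atTop (nhds 1) := by
    have h1 : Tendsto (fun n : ℕ => (2:ℝ) ^ ((n:ℝ)⁻¹)) atTop (nhds ((2:ℝ) ^ (0:ℝ))) :=
      Filter.Tendsto.rpow tendsto_const_nhds hinv (Or.inl two_ne_zero)
    rwa [Real.rpow_zero] at h1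
  have hlo : Tendsto (fun n : ℕ => ((r^(n-1)/2 : ℝ)) ^ ((n:ℝ)⁻¹)) atTop (nhds r) := by
    have h1 := hup.div h2exp one_ne_zero
    rw [div_one] at h1
    refine h1.congr (fun n => ?_)
    show (r ^ (n-1)) ^ ((n:ℝ))⁻¹ / 2 ^ ((n:ℝ))⁻¹ = _
    rw [Real.div_rpow (pow_nonneg hr0.le _) (by norm_num : (0:ℝ) ≤ 2)]
  refine tendsto_of_tendsto_of_tendsto_of_le_of_le' hlo hup ?_ ?_
  · filter_upwards [eventually_ge_atTop 1] with n hn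
    exact Real.rpow_le_rpow (by positivity) (hlb n hn) (by positivity)
  · filter_upwards [eventually_ge_atTop 1] with n hn
    exact Real.rpow_le_rpow (by positivity) (hub n hn) (by positivity)

/-- the growth rate of X exists and equals 2 + √2. -/
theorem xcount_growth_rate :
    Filter.Tendsto (fun n : ℕ => (xcount n : ℝ) ^ ((n : ℝ)⁻¹))
      Filter.atTop (nhds (2 + Real.sqrt 2)) := by
  exact xcount_growth_rate'
end
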